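/- arXiv:1104.3664 — 3 statements merged into one kernel-verified Lean document; each statement's English description precedes it below -/
import Mathlib

section
/- Let k ≥ 2 and let g_1, …, g_k be real power series with finite regularity factors α(g_i) < ∞. Then for every finite subset G_n ⊆ G with δ_n > 0, the block norm of the difference between the product of the restricted matrices and the restricted matrix of the product power series satisfies b_n(K_n(g_1)·K_n(g_2)⋯K_n(g_k) − K_n(g_1·g_2⋯g_k)) ≤ ((k−1)/2)·α(g_1)·α(g_2)⋯α(g_k), where g_1⋯g_k denotes the Cauchy product of the power series. -/
open scoped BigOperators Classical
open MeasureTheory Filter ProbabilityTheory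

noncomputable section

variable {G : Type*}

/-- Entrywise powers of the kernel `W`. -/
def Wpow (W : G → G → ℝ) : ℕ → G → G → ℝ
  | 0 => fun i j => if i = j then (1 : ℝ) else 0
  | (h + 1) => fun i j => ∑' k, W i k * Wpow W h k j

/-- The infinite matrix `K(f)` associated to a power series `f`. -/
def Kmat (W : G → G → ℝ) (f : ℕ → ℝ) (i j : G) : ℝ :=
  ∑' h, f h * Wpow W h i j

/-- The finite matrix `K_n(f)`, the restriction of `K(f)` to a finite subset. -/
def Kn (W : G → G → ℝ) (f : ℕ → ℝ) (Gn : Finset G) : Matrix Gn Gn ℝ :=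
  Matrix.of fun i j => Kmat W f (i : G) (j : G)

/-- The regularity factor `α(f) = Σ_h |f_h| (h+1)`. -/
def regFactor (f : ℕ → ℝ) : ℝ := ∑' h, |f h| * (h + 1 : ℝ)

/-- `‖f‖_{1,pol} = Σ_h |f_h|`. -/
def polNorm (f : ℕ → ℝ) : ℝ := ∑' h, |f h|

/-- Cauchy product of power series. -/
def cauchy (f g : ℕ → ℝ) (h : ℕ) : ℝ :=
  ∑ k ∈ Finset.range (h + 1), f k * g (h - k)

/-- The unit power series (`1`). -/
def cauchyOne : ℕ → ℝ := fun h => if h = 0 then 1 else 0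

/-- `k`-th Cauchy power of a power series. -/
def cauchyPow (g : ℕ → ℝ) : ℕ → ℕ → ℝ
  | 0 => cauchyOne
  | (k + 1) => cauchy g (cauchyPow g k)

/-- `δ_n`: the cardinality of the boundary of `G_n`. -/
def boundary (W : G → G → ℝ) (Gn : Finset G) : ℕ :=
  ({i | i ∈ Gn ∧ ∃ j, j ∉ Gn ∧ W i j ≠ 0} : Set G).ncard

/-- The block norm `b_n(B) = (1/δ_n) Σ_{i,j} |B(i,j)|`. -/
def blockNorm (W : G → G → ℝ) (Gn : Finset G) (B : Matrix Gn Gn ℝ) : ℝ :=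
  (1 / (boundary W Gn : ℝ)) * ∑ i, ∑ j, |B i j|

/-- Evaluation of a power series at a point. -/
def fEval (f : ℕ → ℝ) (x : ℝ) : ℝ := ∑' h, f h * x ^ h

/-- The class `F_ρ`: positive on `[-1,1]`, with `log f` admitting a power series
expansion on `[-1,1]` whose regularity factor is at most `ρ`. -/
def memF (ρ : ℝ) (f : ℕ → ℝ) : Prop :=
  Summable (fun h => |f h|) ∧
  (∀ x ∈ Set.Icc (-1 : ℝ) 1, 0 < fEval f x) ∧
  ∃ g : ℕ → ℝ, Summable (fun h => |g h| * (h + 1 : ℝ)) ∧ regFactor g ≤ ρ ∧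
    ∀ x ∈ Set.Icc (-1 : ℝ) 1, Real.log (fEval f x) = fEval g x

/-- The standing hypotheses on the kernel `W`: symmetry, degree bounded by `D`,
and entries bounded by `1/D`. -/
def KernelHyp (W : G → G → ℝ) (D : ℕ) : Prop :=
  (∀ i j, W i j = W j i) ∧
  (∀ i, ({j | W i j ≠ 0} : Set G).Finite) ∧
  (∀ i, ({j | W i j ≠ 0} : Set G).ncard ≤ D) ∧
  (∀ i j, |W i j| ≤ 1 / (D : ℝ))

/-!
The defect `K_n(f) K_n(p) - K_n(f ⋆ p)` is the double series
`∑ f_a p_b ((W^a)_n (W^b)_n - (W^{a+b})_n)`, and the `(i, j)` entry of the monomial defect is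
`-∑_{l ∉ G_n} W^a(i, l) W^b(l, j)`: only paths that leave `G_n` contribute. The mass
`∑_{i ∈ G_n} ∑_{l ∉ G_n} |W^a(i, l)|` leaving `G_n` grows by at most `δ_n` per step, so the
monomial defect has block norm at most `min(a, b) ≤ (a + 1)(b + 1)/2`, which sums to
`α(f) α(p) / 2`. For `k` factors one telescopes, using that the columns of `K_n(f)` have absolute
sums at most `‖f‖_{1,pol} ≤ α(f)` and that `α` is submultiplicative for the Cauchy product.
-/

open Finset Function
open scoped Matrix

section Summation

lemma exists_finset_forall_support_subset {α β M : Type*} [Zero M] {F : α → β → M}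
    (hF : ∀ a, (support (F a)).Finite) (S : Finset α) :
    ∃ t : Finset β, ∀ a ∈ S, support (F a) ⊆ t :=
  ⟨S.biUnion fun a => (hF a).toFinset, fun a ha _ hb =>
    mem_coe.2 (mem_biUnion.2 ⟨a, ha, (hF a).mem_toFinset.2 hb⟩)⟩

lemma sum_abs_tsum_le {ι κ : Type*} (s : Finset κ) {F : κ → ι → ℝ}
    (hF : ∀ k ∈ s, Summable fun q => |F k q|) :
    ∑ k ∈ s, |∑' q, F k q| ≤ ∑' q, ∑ k ∈ s, |F k q| := by
  rw [Summable.tsum_finsetSum hF]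
  exact sum_le_sum fun k hk => norm_tsum_le_tsum_norm (f := F k) (hF k hk)

lemma tsum_eq_tsum_sum_antidiagonal {F : ℕ × ℕ → ℝ} (hF : Summable F) :
    ∑' q, F q = ∑' n, ∑ q ∈ antidiagonal n, F q := by
  let e := HasAntidiagonal.sigmaAntidiagonalEquivProd (A := ℕ)
  rw [← e.tsum_eq, Summable.tsum_sigma' (f := fun c => F (e c))
    (fun n => (hasSum_fintype _).summable) (e.summable_iff.2 hF)]
  exact tsum_congr fun n => Finset.tsum_subtype (antidiagonal n) F

lemma summable_abs_mul_abs {f p : ℕ → ℝ} (hf : Summable fun h => |f h|)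
    (hp : Summable fun h => |p h|) : Summable fun q : ℕ × ℕ => |f q.1| * |p q.2| :=
  summable_mul_of_summable_norm (f := fun h => |f h|) (g := fun h => |p h|)
    (by simpa using hf) (by simpa using hp)

lemma summable_abs_mul_mul_of_abs_le {f p : ℕ → ℝ} (hf : Summable fun h => |f h|)
    (hp : Summable fun h => |p h|) {c : ℕ × ℕ → ℝ} {C : ℝ} (hc : ∀ q, |c q| ≤ C) :
    Summable fun q : ℕ × ℕ => |f q.1 * p q.2 * c q| :=
  ((summable_abs_mul_abs hf hp).mul_right C).of_nonneg_of_le (fun _ => abs_nonneg _) fun q => by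
    rw [abs_mul, abs_mul]
    exact mul_le_mul_of_nonneg_left (hc q) (by positivity)

end Summation

lemma Matrix.sum_sum_abs_mul_le {l m n : Type*} [Fintype l] [Fintype m] [Fintype n]
    (A : Matrix l m ℝ) (B : Matrix m n ℝ) {C : ℝ} (hA : ∀ k, ∑ i, |A i k| ≤ C) :
    ∑ i, ∑ j, |(A * B) i j| ≤ C * ∑ k, ∑ j, |B k j| := by
  calc ∑ i, ∑ j, |(A * B) i j| ≤ ∑ i, ∑ j, ∑ k, |A i k| * |B k j| :=
        sum_le_sum fun i _ => sum_le_sum fun j _ => by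
          rw [Matrix.mul_apply]
          exact (abs_sum_le_sum_abs _ _).trans_eq (by simp_rw [abs_mul])
    _ = ∑ k, (∑ i, |A i k|) * ∑ j, |B k j| := by
        simp_rw [sum_mul, mul_sum]
        exact (sum_congr rfl fun i _ => sum_comm).trans sum_comm
    _ ≤ ∑ k, C * ∑ j, |B k j| := sum_le_sum fun k _ =>
        mul_le_mul_of_nonneg_right (hA k) (sum_nonneg fun _ _ => abs_nonneg _)
    _ = C * ∑ k, ∑ j, |B k j| := (mul_sum _ _ _).symm

/-- `α(f) < ∞`; without it `regFactor f` is the junk value `0`. -/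
def HasFiniteRegFactor (f : ℕ → ℝ) : Prop := Summable fun h => |f h| * (h + 1 : ℝ)

section PowerSeries

lemma regFactor_nonneg (f : ℕ → ℝ) : 0 ≤ regFactor f :=
  tsum_nonneg fun _ => by positivity

lemma HasFiniteRegFactor.summable_abs {f : ℕ → ℝ} (hf : HasFiniteRegFactor f) :
    Summable fun h => |f h| :=
  hf.of_nonneg_of_le (fun _ => abs_nonneg _) fun h => le_mul_of_one_le_right (abs_nonneg _)
    (by simp)

lemma polNorm_le_regFactor {f : ℕ → ℝ} (hf : HasFiniteRegFactor f) :
    polNorm f ≤ regFactor f :=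
  hf.summable_abs.tsum_le_tsum (fun h => le_mul_of_one_le_right (abs_nonneg _) (by simp)) hf

lemma abs_cauchy_mul_le (f p : ℕ → ℝ) (n : ℕ) :
    |cauchy f p n| * (n + 1 : ℝ)
      ≤ ∑ q ∈ antidiagonal n, |f q.1| * (q.1 + 1 : ℝ) * (|p q.2| * (q.2 + 1 : ℝ)) := by
  rw [cauchy, ← Nat.sum_antidiagonal_eq_sum_range_succ_mk (fun q => f q.1 * p q.2)]
  refine (mul_le_mul_of_nonneg_right (abs_sum_le_sum_abs _ _) (by positivity)).trans ?_
  rw [sum_mul]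
  refine sum_le_sum fun q hq => ?_
  have hn : (n : ℝ) = q.1 + q.2 := by exact_mod_cast (mem_antidiagonal.1 hq).symm
  rw [abs_mul, hn]
  have : 0 ≤ |f q.1| * |p q.2| := by positivity
  nlinarith [mul_nonneg this (mul_nonneg (Nat.cast_nonneg (α := ℝ) q.1) (Nat.cast_nonneg q.2))]

lemma HasFiniteRegFactor.summable_mul {f p : ℕ → ℝ} (hf : HasFiniteRegFactor f)
    (hp : HasFiniteRegFactor p) :
    Summable fun q : ℕ × ℕ => |f q.1| * (q.1 + 1 : ℝ) * (|p q.2| * (q.2 + 1 : ℝ)) :=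
  summable_mul_of_summable_norm (f := fun h => |f h| * (h + 1 : ℝ))
    (g := fun h => |p h| * (h + 1 : ℝ)) (Summable.abs hf) (Summable.abs hp)

lemma HasFiniteRegFactor.summable_sum_antidiagonal {f p : ℕ → ℝ} (hf : HasFiniteRegFactor f)
    (hp : HasFiniteRegFactor p) :
    Summable fun n =>
      ∑ q ∈ antidiagonal n, |f q.1| * (q.1 + 1 : ℝ) * (|p q.2| * (q.2 + 1 : ℝ)) :=
  summable_sum_mul_antidiagonal_of_summable_mul (f := fun h => |f h| * (h + 1 : ℝ))
    (g := fun h => |p h| * (h + 1 : ℝ)) (hf.summable_mul hp)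

lemma hasFiniteRegFactor_cauchy {f p : ℕ → ℝ} (hf : HasFiniteRegFactor f)
    (hp : HasFiniteRegFactor p) : HasFiniteRegFactor (cauchy f p) :=
  Summable.of_nonneg_of_le (f := fun n => ∑ q ∈ antidiagonal n, _) (fun _ => by positivity)
    (abs_cauchy_mul_le f p) (hf.summable_sum_antidiagonal hp)

lemma regFactor_cauchy_le {f p : ℕ → ℝ} (hf : HasFiniteRegFactor f)
    (hp : HasFiniteRegFactor p) : regFactor (cauchy f p) ≤ regFactor f * regFactor p := by
  rw [regFactor, regFactor, regFactor,
    Summable.tsum_mul_tsum_eq_tsum_sum_antidiagonal (f := fun h => |f h| * (h + 1 : ℝ))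
      (g := fun h => |p h| * (h + 1 : ℝ)) hf hp (hf.summable_mul hp)]
  exact (hasFiniteRegFactor_cauchy hf hp).tsum_le_tsum (abs_cauchy_mul_le f p)
    (hf.summable_sum_antidiagonal hp)

lemma cauchy_cauchyOne (f : ℕ → ℝ) : cauchy f cauchyOne = f := by
  ext n
  rw [cauchy, sum_eq_single n]
  · simp [cauchyOne]
  · intro k hk hkn
    have : n - k ≠ 0 := by have := mem_range.1 hk; omega
    simp [cauchyOne, this]
  · simp

lemma hasFiniteRegFactor_cauchyOne : HasFiniteRegFactor cauchyOne :=
  summable_of_ne_finset_zero (s := {0}) fun n hn => by simp_all [cauchyOne]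

lemma regFactor_cauchyOne : regFactor cauchyOne = 1 := by
  rw [regFactor, tsum_eq_single 0 fun n hn => by simp [cauchyOne, hn]]
  simp [cauchyOne]

lemma hasFiniteRegFactor_foldr_cauchy {fs : List (ℕ → ℝ)}
    (hfs : ∀ f ∈ fs, HasFiniteRegFactor f) :
    HasFiniteRegFactor (fs.foldr cauchy cauchyOne) := by
  induction fs with
  | nil => exact hasFiniteRegFactor_cauchyOne
  | cons f fs ih =>
    exact hasFiniteRegFactor_cauchy (hfs f List.mem_cons_self)
      (ih fun g hg => hfs g (List.mem_cons_of_mem f hg))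

lemma regFactor_foldr_cauchy_le {fs : List (ℕ → ℝ)}
    (hfs : ∀ f ∈ fs, HasFiniteRegFactor f) :
    regFactor (fs.foldr cauchy cauchyOne) ≤ (fs.map regFactor).prod := by
  induction fs with
  | nil => exact regFactor_cauchyOne.le
  | cons f fs ih =>
    have hfs' : ∀ g ∈ fs, HasFiniteRegFactor g := fun g hg => hfs g (List.mem_cons_of_mem f hg)
    exact (regFactor_cauchy_le (hfs f List.mem_cons_self)
      (hasFiniteRegFactor_foldr_cauchy hfs')).trans
        (mul_le_mul_of_nonneg_left (ih hfs') (regFactor_nonneg f))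

end PowerSeries

/-- `(W^h)_n` -/
def restrictWpow (W : G → G → ℝ) (h : ℕ) (Gn : Finset G) : Matrix Gn Gn ℝ :=
  Matrix.of fun i j => Wpow W h i j

section Powers

variable {W : G → G → ℝ}

lemma Wpow_zero_apply (i j : G) : Wpow W 0 i j = if i = j then 1 else 0 := rfl

lemma Wpow_one : Wpow W 1 = W := by
  ext i j
  simp [Wpow]

lemma Wpow_succ_apply_eq_sum {i : G} {s : Finset G} (hs : support (W i) ⊆ s) (h : ℕ) (j : G) :
    Wpow W (h + 1) i j = ∑ k ∈ s, W i k * Wpow W h k j :=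
  tsum_eq_sum' ((support_mul_subset_left _ _).trans hs)

lemma sum_abs_Wpow_succ_le {i : G} {s : Finset G} (hs : support (W i) ⊆ s) (h : ℕ)
    (t : Finset G) :
    ∑ l ∈ t, |Wpow W (h + 1) i l| ≤ ∑ k ∈ s, |W i k| * ∑ l ∈ t, |Wpow W h k l| := by
  simp_rw [Wpow_succ_apply_eq_sum hs, mul_sum]
  rw [sum_comm]
  exact sum_le_sum fun l _ => (abs_sum_le_sum_abs _ _).trans_eq (by simp_rw [abs_mul])

lemma finite_support_Wpow (hW : ∀ i, (support (W i)).Finite) (h : ℕ) (i : G) :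
    (support (Wpow W h i)).Finite := by
  induction h generalizing i with
  | zero =>
    refine (Set.finite_singleton i).subset fun j hj => ?_
    by_contra hji
    exact hj (if_neg (Ne.symm hji))
  | succ h ih =>
    refine ((hW i).biUnion fun k _ => ih k).subset fun j hj => ?_
    rw [mem_support, Wpow_succ_apply_eq_sum (hW i).coe_toFinset.superset] at hj
    obtain ⟨k, -, hk⟩ := exists_ne_zero_of_sum_ne_zero hj
    exact Set.mem_biUnion (left_ne_zero_of_mul hk) (right_ne_zero_of_mul hk)

lemma Wpow_add_apply_eq_sum (hW : ∀ i, (support (W i)).Finite) (a b : ℕ) {i : G}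
    {s : Finset G} (hs : support (Wpow W a i) ⊆ s) (j : G) :
    Wpow W (a + b) i j = ∑ l ∈ s, Wpow W a i l * Wpow W b l j := by
  induction a generalizing i s with
  | zero =>
    have hi : i ∈ s := hs (by simp [Wpow_zero_apply])
    simp [Wpow_zero_apply, hi]
  | succ a ih =>
    obtain ⟨t, ht⟩ := exists_finset_forall_support_subset (finite_support_Wpow hW a)
      (hW i).toFinset
    have hst : s ⊆ s ∪ t := subset_union_left
    calc Wpow W (a + 1 + b) i j
        = ∑ k ∈ (hW i).toFinset, W i k * ∑ l ∈ s ∪ t, Wpow W a k l * Wpow W b l j := by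
          rw [Nat.add_right_comm, Wpow_succ_apply_eq_sum (hW i).coe_toFinset.superset]
          exact sum_congr rfl fun k hk =>
            by rw [ih ((ht k hk).trans (coe_subset.2 subset_union_right))]
      _ = ∑ l ∈ s ∪ t, Wpow W (a + 1) i l * Wpow W b l j := by
          simp_rw [Wpow_succ_apply_eq_sum (hW i).coe_toFinset.superset, mul_sum, sum_mul,
            mul_assoc]
          exact sum_comm
      _ = ∑ l ∈ s, Wpow W (a + 1) i l * Wpow W b l j :=
          (sum_subset hst fun l _ hl => by
            rw [notMem_support.1 fun h => hl (hs h), zero_mul]).symm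

lemma Wpow_symm (hsymm : ∀ i j, W i j = W j i) (hW : ∀ i, (support (W i)).Finite)
    (h : ℕ) (i j : G) : Wpow W h i j = Wpow W h j i := by
  induction h generalizing i j with
  | zero => simp [Wpow_zero_apply, eq_comm]
  | succ h ih =>
    let u := (hW i).toFinset ∪ (finite_support_Wpow hW h j).toFinset
    rw [Wpow_succ_apply_eq_sum (s := u) (fun k hk => by simp [u, mem_support.1 hk]),
      Wpow_add_apply_eq_sum hW h 1 (s := u) (fun k hk => by simp [u, mem_support.1 hk]),
      Wpow_one]
    exact sum_congr rfl fun k _ => by rw [ih, hsymm, mul_comm]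

lemma Kn_apply (f : ℕ → ℝ) (Gn : Finset G) (i j : Gn) :
    Kn W f Gn i j = ∑' h, f h * Wpow W h i j := rfl

@[simp]
lemma restrictWpow_apply (h : ℕ) (Gn : Finset G) (i j : Gn) :
    restrictWpow W h Gn i j = Wpow W h i j := rfl

lemma restrictWpow_mul_sub_apply (hW : ∀ i, (support (W i)).Finite) (Gn : Finset G) (a b : ℕ)
    {t : Finset G} (ht : ∀ i ∈ Gn, support (Wpow W a i) ⊆ t) (i j : Gn) :
    (restrictWpow W a Gn * restrictWpow W b Gn - restrictWpow W (a + b) Gn) i j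
      = -∑ l ∈ t \ Gn, Wpow W a i l * Wpow W b l j := by
  simp only [Matrix.sub_apply, Matrix.mul_apply, restrictWpow_apply]
  rw [Wpow_add_apply_eq_sum hW a b ((ht i i.2).trans (coe_subset.2 subset_union_right)),
    ← sum_sdiff (subset_union_left (s₂ := t)), union_sdiff_left,
    sum_coe_sort Gn (fun l => Wpow W a i l * Wpow W b l j)]
  ring

lemma transpose_restrictWpow (hW : ∀ i, (support (W i)).Finite) (hsymm : ∀ i j, W i j = W j i)
    (h : ℕ) (Gn : Finset G) : (restrictWpow W h Gn)ᵀ = restrictWpow W h Gn := by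
  ext i j
  exact Wpow_symm hsymm hW h j i

end Powers

structure IsLocalContraction (W : G → G → ℝ) : Prop where
  finite_support : ∀ i, (support (W i)).Finite
  sum_abs_le_one : ∀ i (s : Finset G), ∑ j ∈ s, |W i j| ≤ 1

lemma KernelHyp.isLocalContraction {W : G → G → ℝ} {D : ℕ} (h : KernelHyp W D) :
    IsLocalContraction W where
  finite_support := h.2.1
  sum_abs_le_one i s := by
    obtain ⟨-, hfin, hcard, hbound⟩ := h
    have hsub : ((s.filter (W i · ≠ 0) : Finset G) : Set G) ⊆ {j | W i j ≠ 0} := by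
      intro j hj
      exact (mem_filter.1 hj).2
    calc ∑ j ∈ s, |W i j| = ∑ j ∈ s.filter (W i · ≠ 0), |W i j| :=
          (sum_filter_of_ne fun j _ hj => abs_ne_zero.1 hj).symm
      _ ≤ #(s.filter (W i · ≠ 0)) • (1 / (D : ℝ)) :=
          sum_le_card_nsmul _ _ _ fun j _ => hbound i j
      _ ≤ (D : ℝ) * (1 / D) := by
          rw [nsmul_eq_mul]
          gcongr
          exact_mod_cast (Set.ncard_coe_finset _).symm.trans_le
            ((Set.ncard_le_ncard hsub (hfin i)).trans (hcard i))
      _ ≤ 1 := by rw [mul_one_div]; exact div_self_le_one _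

namespace IsLocalContraction

variable {W : G → G → ℝ}

lemma sum_abs_Wpow_le_one (hW : IsLocalContraction W) (h : ℕ) (i : G) (s : Finset G) :
    ∑ j ∈ s, |Wpow W h i j| ≤ 1 := by
  induction h generalizing i with
  | zero =>
    by_cases hi : i ∈ s <;> simp [Wpow_zero_apply, apply_ite, hi]
  | succ h ih =>
    calc ∑ j ∈ s, |Wpow W (h + 1) i j|
        ≤ ∑ k ∈ (hW.finite_support i).toFinset, |W i k| * ∑ j ∈ s, |Wpow W h k j| :=
          sum_abs_Wpow_succ_le (hW.finite_support i).coe_toFinset.superset h s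
      _ ≤ ∑ k ∈ (hW.finite_support i).toFinset, |W i k| :=
          sum_le_sum fun k _ => mul_le_of_le_one_right (abs_nonneg _) (ih k)
      _ ≤ 1 := hW.sum_abs_le_one i _

lemma abs_Wpow_le_one (hW : IsLocalContraction W) (h : ℕ) (i j : G) : |Wpow W h i j| ≤ 1 := by
  simpa using hW.sum_abs_Wpow_le_one h i {j}

lemma sum_abs_Wpow_col_le_one (hW : IsLocalContraction W) (hsymm : ∀ i j, W i j = W j i)
    (h : ℕ) (s : Finset G) (j : G) : ∑ i ∈ s, |Wpow W h i j| ≤ 1 := by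
  simpa only [Wpow_symm hsymm hW.finite_support h _ j] using hW.sum_abs_Wpow_le_one h j s

lemma sum_sum_abs_sdiff_le_boundary (hW : IsLocalContraction W) (Gn t : Finset G) :
    ∑ i ∈ Gn, ∑ k ∈ t \ Gn, |W i k| ≤ boundary W Gn := by
  have hbd : boundary W Gn = #(Gn.filter fun i => ∃ j, j ∉ Gn ∧ W i j ≠ 0) := by
    rw [boundary, ← Set.ncard_coe_finset]
    congr 1
    ext
    simp
  rw [hbd, ← sum_filter_of_ne (p := fun i => ∃ j, j ∉ Gn ∧ W i j ≠ 0) fun i _ hi => ?_]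
  · simpa using sum_le_card_nsmul _ _ 1 fun i _ => hW.sum_abs_le_one i _
  · obtain ⟨k, hk, hk0⟩ := exists_ne_zero_of_sum_ne_zero hi
    exact ⟨k, (mem_sdiff.1 hk).2, abs_ne_zero.1 hk0⟩

/-- The mass of `W^h` leaving `Gn` grows by at most `δ_n` per step: one more step either starts
outside `Gn`, or leaves `Gn` from a boundary point. -/
lemma sum_sum_abs_Wpow_sdiff_le (hW : IsLocalContraction W) (hsymm : ∀ i j, W i j = W j i)
    (Gn : Finset G) (h : ℕ) (t : Finset G) :
    ∑ i ∈ Gn, ∑ l ∈ t \ Gn, |Wpow W h i l| ≤ h * boundary W Gn := by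
  induction h with
  | zero =>
    refine (sum_eq_zero fun i hi => sum_eq_zero fun l hl => ?_).trans_le (by simp)
    have : i ≠ l := fun h => (mem_sdiff.1 hl).2 (h ▸ hi)
    simp [Wpow_zero_apply, this]
  | succ h ih =>
    obtain ⟨u, hu⟩ := exists_finset_forall_support_subset hW.finite_support Gn
    set X : G → ℝ := fun k => ∑ l ∈ t \ Gn, |Wpow W h k l|
    have hX : ∀ k, X k ≤ 1 := fun k => hW.sum_abs_Wpow_le_one h k _
    have hrow : ∀ i ∈ Gn, ∑ l ∈ t \ Gn, |Wpow W (h + 1) i l|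
        ≤ ∑ k ∈ Gn, |W i k| * X k + ∑ k ∈ (Gn ∪ u) \ Gn, |W i k| := by
      intro i hi
      have hs : support (W i) ⊆ ↑(Gn ∪ u) := (hu i hi).trans (coe_subset.2 subset_union_right)
      refine (sum_abs_Wpow_succ_le hs h _).trans ?_
      rw [← sum_sdiff subset_union_left, add_comm]
      gcongr with k
      exact mul_le_of_le_one_right (abs_nonneg _) (hX k)
    have hstay : ∑ i ∈ Gn, ∑ k ∈ Gn, |W i k| * X k ≤ ∑ k ∈ Gn, X k := by
      rw [sum_comm]
      refine sum_le_sum fun k _ => ?_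
      rw [← sum_mul]
      refine mul_le_of_le_one_left (sum_nonneg fun _ _ => abs_nonneg _) ?_
      simpa only [hsymm _ k] using hW.sum_abs_le_one k Gn
    calc ∑ i ∈ Gn, ∑ l ∈ t \ Gn, |Wpow W (h + 1) i l|
        ≤ ∑ i ∈ Gn, (∑ k ∈ Gn, |W i k| * X k + ∑ k ∈ (Gn ∪ u) \ Gn, |W i k|) :=
          sum_le_sum hrow
      _ ≤ h * boundary W Gn + boundary W Gn := by
          rw [sum_add_distrib]
          exact add_le_add (hstay.trans ih) (hW.sum_sum_abs_sdiff_le_boundary Gn _)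
      _ = (h + 1 : ℕ) * boundary W Gn := by push_cast; ring

lemma sum_sum_abs_restrictWpow_mul_sub_le_fst (hW : IsLocalContraction W)
    (hsymm : ∀ i j, W i j = W j i) (Gn : Finset G) (a b : ℕ) :
    ∑ i, ∑ j, |(restrictWpow W a Gn * restrictWpow W b Gn - restrictWpow W (a + b) Gn) i j|
      ≤ a * boundary W Gn := by
  obtain ⟨t, ht⟩ :=
    exists_finset_forall_support_subset (finite_support_Wpow hW.finite_support a) Gn
  have hrow : ∀ i : Gn, ∑ j, |(restrictWpow W a Gn * restrictWpow W b Gn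
      - restrictWpow W (a + b) Gn) i j| ≤ ∑ l ∈ t \ Gn, |Wpow W a i l| := by
    intro i
    simp_rw [restrictWpow_mul_sub_apply hW.finite_support Gn a b ht, abs_neg]
    calc ∑ j : Gn, |∑ l ∈ t \ Gn, Wpow W a i l * Wpow W b l j|
        ≤ ∑ j : Gn, ∑ l ∈ t \ Gn, |Wpow W a i l| * |Wpow W b l j| :=
          sum_le_sum fun j _ => (abs_sum_le_sum_abs _ _).trans_eq (by simp_rw [abs_mul])
      _ = ∑ l ∈ t \ Gn, |Wpow W a i l| * ∑ j ∈ Gn, |Wpow W b l j| := by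
          rw [sum_comm]
          simp_rw [mul_sum]
          exact sum_congr rfl fun l _ => sum_coe_sort Gn (fun j => |Wpow W a i l| * |Wpow W b l j|)
      _ ≤ ∑ l ∈ t \ Gn, |Wpow W a i l| :=
          sum_le_sum fun l _ => mul_le_of_le_one_right (abs_nonneg _)
            (hW.sum_abs_Wpow_le_one b l Gn)
  calc _ ≤ ∑ i : Gn, ∑ l ∈ t \ Gn, |Wpow W a i l| := sum_le_sum fun i _ => hrow i
    _ = ∑ i ∈ Gn, ∑ l ∈ t \ Gn, |Wpow W a i l| :=
        sum_coe_sort Gn (fun i => ∑ l ∈ t \ Gn, |Wpow W a i l|)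
    _ ≤ a * boundary W Gn := hW.sum_sum_abs_Wpow_sdiff_le hsymm Gn a t

lemma sum_sum_abs_restrictWpow_mul_sub_le (hW : IsLocalContraction W)
    (hsymm : ∀ i j, W i j = W j i) (Gn : Finset G) (a b : ℕ) :
    ∑ i, ∑ j, |(restrictWpow W a Gn * restrictWpow W b Gn - restrictWpow W (a + b) Gn) i j|
      ≤ min (a : ℝ) b * boundary W Gn := by
  have htr : (restrictWpow W a Gn * restrictWpow W b Gn - restrictWpow W (a + b) Gn)ᵀ
      = restrictWpow W b Gn * restrictWpow W a Gn - restrictWpow W (b + a) Gn := by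
    simp only [Matrix.transpose_sub, Matrix.transpose_mul,
      transpose_restrictWpow hW.finite_support hsymm, add_comm a b]
  have hright := sum_sum_abs_restrictWpow_mul_sub_le_fst hW hsymm Gn b a
  rw [← htr, sum_comm] at hright
  rw [min_mul_of_nonneg _ _ (Nat.cast_nonneg _)]
  exact le_min (sum_sum_abs_restrictWpow_mul_sub_le_fst hW hsymm Gn a b) hright

lemma summable_abs_mul_Wpow (hW : IsLocalContraction W) {f : ℕ → ℝ}
    (hf : Summable fun h => |f h|) (i j : G) : Summable fun h => |f h * Wpow W h i j| :=
  hf.of_nonneg_of_le (fun _ => abs_nonneg _) fun h => by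
    rw [abs_mul]
    exact mul_le_of_le_one_right (abs_nonneg _) (hW.abs_Wpow_le_one h i j)

lemma sum_abs_Kn_col_le_polNorm (hW : IsLocalContraction W) (hsymm : ∀ i j, W i j = W j i)
    {f : ℕ → ℝ} (hf : Summable fun h => |f h|) (Gn : Finset G) (l : Gn) :
    ∑ i, |Kn W f Gn i l| ≤ polNorm f := by
  have hcol : ∀ h, ∑ i : Gn, |f h * Wpow W h i l| ≤ |f h| := fun h => by
    simp_rw [abs_mul, ← mul_sum]
    rw [sum_coe_sort Gn (fun i => |Wpow W h i l|)]
    exact mul_le_of_le_one_right (abs_nonneg _) (hW.sum_abs_Wpow_col_le_one hsymm h Gn l)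
  have hsum : ∀ i : Gn, Summable fun h => |f h * Wpow W h i l| :=
    fun i => hW.summable_abs_mul_Wpow hf i l
  simp_rw [Kn_apply]
  calc ∑ i : Gn, |∑' h, f h * Wpow W h i l| ≤ ∑' h, ∑ i : Gn, |f h * Wpow W h i l| :=
        sum_abs_tsum_le _ fun i _ => hsum i
    _ ≤ ∑' h, |f h| := (summable_sum fun i _ => hsum i).tsum_le_tsum hcol hf

lemma abs_restrictWpow_mul_apply_le_one (hW : IsLocalContraction W) (a b : ℕ) (Gn : Finset G)
    (i j : Gn) : |(restrictWpow W a Gn * restrictWpow W b Gn) i j| ≤ 1 := by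
  rw [Matrix.mul_apply]
  refine (abs_sum_le_sum_abs _ _).trans ?_
  simp_rw [restrictWpow_apply, abs_mul]
  calc ∑ l : Gn, |Wpow W a i l| * |Wpow W b l j| ≤ ∑ l : Gn, |Wpow W a i l| :=
        sum_le_sum fun l _ => mul_le_of_le_one_right (abs_nonneg _) (hW.abs_Wpow_le_one b l j)
    _ = ∑ l ∈ Gn, |Wpow W a i l| := sum_coe_sort Gn (fun l => |Wpow W a i l|)
    _ ≤ 1 := hW.sum_abs_Wpow_le_one a i Gn

lemma Kn_mul_Kn_sub_Kn_cauchy_apply (hW : IsLocalContraction W) {f p : ℕ → ℝ}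
    (hf : Summable fun h => |f h|) (hp : Summable fun h => |p h|) (Gn : Finset G) (i j : Gn) :
    (Kn W f Gn * Kn W p Gn - Kn W (cauchy f p) Gn) i j
      = ∑' q : ℕ × ℕ, f q.1 * p q.2 *
          (restrictWpow W q.1 Gn * restrictWpow W q.2 Gn - restrictWpow W (q.1 + q.2) Gn) i j := by
  have hmul : (Kn W f Gn * Kn W p Gn) i j = ∑' q : ℕ × ℕ,
      f q.1 * p q.2 * (restrictWpow W q.1 Gn * restrictWpow W q.2 Gn) i j := by
    calc (Kn W f Gn * Kn W p Gn) i j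
        = ∑ l : Gn, ∑' q : ℕ × ℕ, f q.1 * Wpow W q.1 i l * (p q.2 * Wpow W q.2 l j) :=
          sum_congr rfl fun l _ => tsum_mul_tsum_of_summable_norm
            (f := fun h => f h * Wpow W h i l) (g := fun h => p h * Wpow W h l j)
            (hW.summable_abs_mul_Wpow hf i l) (hW.summable_abs_mul_Wpow hp l j)
      _ = ∑' q : ℕ × ℕ, ∑ l : Gn, f q.1 * Wpow W q.1 i l * (p q.2 * Wpow W q.2 l j) :=
          (Summable.tsum_finsetSum fun (l : Gn) _ => summable_mul_of_summable_norm
            (f := fun h => f h * Wpow W h i l) (g := fun h => p h * Wpow W h l j)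
            (hW.summable_abs_mul_Wpow hf i l) (hW.summable_abs_mul_Wpow hp l j)).symm
      _ = _ := tsum_congr fun q => by
          simp only [Matrix.mul_apply, restrictWpow_apply, mul_sum]
          exact sum_congr rfl fun l _ => by ring
  have hcauchy : Kn W (cauchy f p) Gn i j
      = ∑' q : ℕ × ℕ, f q.1 * p q.2 * Wpow W (q.1 + q.2) i j := by
    rw [Kn_apply, tsum_eq_tsum_sum_antidiagonal (summable_abs_mul_mul_of_abs_le hf hp
      (c := fun q => Wpow W (q.1 + q.2) i j) fun q => hW.abs_Wpow_le_one _ _ _).of_abs]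
    refine tsum_congr fun n => ?_
    rw [cauchy, ← Nat.sum_antidiagonal_eq_sum_range_succ_mk (fun q => f q.1 * p q.2), sum_mul]
    exact sum_congr rfl fun q hq => by rw [mem_antidiagonal.1 hq]
  rw [Matrix.sub_apply, hmul, hcauchy, ← Summable.tsum_sub
    (summable_abs_mul_mul_of_abs_le hf hp fun q =>
      hW.abs_restrictWpow_mul_apply_le_one _ _ Gn i j).of_abs
    (summable_abs_mul_mul_of_abs_le hf hp (c := fun q => Wpow W (q.1 + q.2) i j)
      fun q => hW.abs_Wpow_le_one _ _ _).of_abs]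
  exact tsum_congr fun q => by rw [Matrix.sub_apply, restrictWpow_apply]; ring

lemma sum_sum_abs_Kn_mul_Kn_sub_Kn_cauchy_le (hW : IsLocalContraction W)
    (hsymm : ∀ i j, W i j = W j i) {f p : ℕ → ℝ} (hf : HasFiniteRegFactor f)
    (hp : HasFiniteRegFactor p) (Gn : Finset G) :
    ∑ i, ∑ j, |(Kn W f Gn * Kn W p Gn - Kn W (cauchy f p) Gn) i j|
      ≤ boundary W Gn / 2 * (regFactor f * regFactor p) := by
  set D : ℕ × ℕ → Matrix Gn Gn ℝ := fun q =>
    restrictWpow W q.1 Gn * restrictWpow W q.2 Gn - restrictWpow W (q.1 + q.2) Gn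
  have hD : ∀ q (x : Gn × Gn), |D q x.1 x.2| ≤ 2 := fun q x => by
    simp only [D, Matrix.sub_apply, restrictWpow_apply]
    rw [← one_add_one_eq_two]
    exact (abs_sub _ _).trans (add_le_add (hW.abs_restrictWpow_mul_apply_le_one q.1 q.2 Gn x.1 x.2)
      (hW.abs_Wpow_le_one (q.1 + q.2) x.1 x.2))
  have hsum : ∀ x : Gn × Gn, Summable fun q => |f q.1 * p q.2 * D q x.1 x.2| := fun x =>
    summable_abs_mul_mul_of_abs_le hf.summable_abs hp.summable_abs (c := fun q => D q x.1 x.2)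
      fun q => hD q x
  have hweight : ∀ q : ℕ × ℕ, |f q.1 * p q.2| * ∑ i, ∑ j, |D q i j|
      ≤ |f q.1| * (q.1 + 1 : ℝ) * (|p q.2| * (q.2 + 1 : ℝ)) * (boundary W Gn / 2) := by
    intro q
    have hmin : min (q.1 : ℝ) q.2 ≤ (q.1 + 1) * (q.2 + 1) / 2 := by
      nlinarith [min_le_left (q.1 : ℝ) q.2, min_le_right (q.1 : ℝ) q.2,
        mul_nonneg (Nat.cast_nonneg (α := ℝ) q.1) (Nat.cast_nonneg (α := ℝ) q.2)]
    calc |f q.1 * p q.2| * ∑ i, ∑ j, |D q i j|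
        ≤ |f q.1 * p q.2| * (min (q.1 : ℝ) q.2 * boundary W Gn) :=
          mul_le_mul_of_nonneg_left (sum_sum_abs_restrictWpow_mul_sub_le hW hsymm Gn q.1 q.2)
            (abs_nonneg _)
      _ ≤ |f q.1 * p q.2| * ((q.1 + 1) * (q.2 + 1) / 2 * boundary W Gn) := by gcongr
      _ = _ := by rw [abs_mul]; ring
  have hweighted := (hf.summable_mul hp).mul_right (boundary W Gn / 2 : ℝ)
  calc ∑ i, ∑ j, |(Kn W f Gn * Kn W p Gn - Kn W (cauchy f p) Gn) i j|
      = ∑ i, ∑ j, |∑' q, f q.1 * p q.2 * D q i j| := by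
        simp_rw [hW.Kn_mul_Kn_sub_Kn_cauchy_apply hf.summable_abs hp.summable_abs, D]
    _ = ∑ x : Gn × Gn, |∑' q, f q.1 * p q.2 * D q x.1 x.2| :=
        (Fintype.sum_prod_type' fun i j => |∑' q, f q.1 * p q.2 * D q i j|).symm
    _ ≤ ∑' q, ∑ x : Gn × Gn, |f q.1 * p q.2 * D q x.1 x.2| :=
        sum_abs_tsum_le _ fun x _ => hsum x
    _ = ∑' q, |f q.1 * p q.2| * ∑ i, ∑ j, |D q i j| := tsum_congr fun q => by
        simp_rw [abs_mul (f q.1 * p q.2), ← mul_sum]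
        rw [Fintype.sum_prod_type' (fun i j => |D q i j|)]
    _ ≤ ∑' q : ℕ × ℕ,
          |f q.1| * (q.1 + 1 : ℝ) * (|p q.2| * (q.2 + 1 : ℝ)) * (boundary W Gn / 2) :=
        (hweighted.of_nonneg_of_le (fun _ => by positivity) hweight).tsum_le_tsum hweight
          hweighted
    _ = boundary W Gn / 2 * (regFactor f * regFactor p) := by
        rw [tsum_mul_right, regFactor, regFactor,
          tsum_mul_tsum_of_summable_norm (f := fun h => |f h| * (h + 1 : ℝ))
            (g := fun h => |p h| * (h + 1 : ℝ)) (Summable.abs hf) (Summable.abs hp), mul_comm]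

lemma sum_sum_abs_prod_Kn_sub_Kn_foldr_le (hW : IsLocalContraction W)
    (hsymm : ∀ i j, W i j = W j i) (Gn : Finset G) (f : ℕ → ℝ) (fs : List (ℕ → ℝ))
    (hfs : ∀ g ∈ f :: fs, HasFiniteRegFactor g) :
    ∑ i, ∑ j, |(((f :: fs).map (Kn W · Gn)).prod
        - Kn W ((f :: fs).foldr cauchy cauchyOne) Gn) i j|
      ≤ fs.length / 2 * boundary W Gn * ((f :: fs).map regFactor).prod := by
  induction fs generalizing f with
  | nil => simp [cauchy_cauchyOne]
  | cons g fs ih =>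
    have hf := hfs f List.mem_cons_self
    have hrest : ∀ q ∈ g :: fs, HasFiniteRegFactor q := fun q hq =>
      hfs q (List.mem_cons_of_mem f hq)
    set P := ((g :: fs).map (Kn W · Gn)).prod
    set Q := (g :: fs).foldr cauchy cauchyOne
    set R := ((g :: fs).map regFactor).prod
    have hsplit : ((f :: g :: fs).map (Kn W · Gn)).prod
        - Kn W ((f :: g :: fs).foldr cauchy cauchyOne) Gn
        = Kn W f Gn * (P - Kn W Q Gn) + (Kn W f Gn * Kn W Q Gn - Kn W (cauchy f Q) Gn) := by
      simp only [List.map_cons, List.prod_cons, List.foldr_cons, P, Q, mul_sub]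
      abel
    have h1 : ∑ i, ∑ j, |(Kn W f Gn * (P - Kn W Q Gn)) i j|
        ≤ regFactor f * (fs.length / 2 * boundary W Gn * R) :=
      (Matrix.sum_sum_abs_mul_le _ _ (hW.sum_abs_Kn_col_le_polNorm hsymm hf.summable_abs Gn)).trans
        (mul_le_mul (polNorm_le_regFactor hf) (ih g hrest)
          (sum_nonneg fun _ _ => sum_nonneg fun _ _ => abs_nonneg _) (regFactor_nonneg f))
    have h2 : ∑ i, ∑ j, |(Kn W f Gn * Kn W Q Gn - Kn W (cauchy f Q) Gn) i j|
        ≤ boundary W Gn / 2 * (regFactor f * R) :=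
      (hW.sum_sum_abs_Kn_mul_Kn_sub_Kn_cauchy_le hsymm hf (hasFiniteRegFactor_foldr_cauchy hrest)
        Gn).trans (by gcongr; exacts [regFactor_nonneg f, regFactor_foldr_cauchy_le hrest])
    calc _ = ∑ i, ∑ j, |(Kn W f Gn * (P - Kn W Q Gn)
            + (Kn W f Gn * Kn W Q Gn - Kn W (cauchy f Q) Gn)) i j| := by rw [hsplit]
      _ ≤ ∑ i, ∑ j, |(Kn W f Gn * (P - Kn W Q Gn)) i j|
            + ∑ i, ∑ j, |(Kn W f Gn * Kn W Q Gn - Kn W (cauchy f Q) Gn) i j| := by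
          rw [← sum_add_distrib]
          exact sum_le_sum fun i _ => (sum_le_sum fun j _ => abs_add_le _ _).trans_eq
            sum_add_distrib
      _ ≤ _ := add_le_add h1 h2
      _ = _ := by simp only [List.length_cons, List.map_cons, List.prod_cons, R]; push_cast; ring

end IsLocalContraction

theorem stmt0_general {G : Type*} (W : G → G → ℝ) (D : ℕ)
    (hker : KernelHyp W D)
    (k : ℕ) (hk : 2 ≤ k) (g : Fin k → ℕ → ℝ)
    (hg : ∀ i, Summable (fun h => |g i h| * (h + 1 : ℝ)))
    (Gn : Finset G) :
    blockNorm W Gn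
        ((List.ofFn fun i => Kn W (g i) Gn).prod
          - Kn W ((List.ofFn g).foldr cauchy cauchyOne) Gn)
      ≤ ((k : ℝ) - 1) / 2 * ∏ i, regFactor (g i) := by
  obtain ⟨n, rfl⟩ : ∃ n, k = n + 1 := ⟨k - 1, by omega⟩
  have hbound := hker.isLocalContraction.sum_sum_abs_prod_Kn_sub_Kn_foldr_le hker.1 Gn (g 0)
    (List.ofFn fun i => g i.succ) (List.ofFn_succ (f := g) ▸ List.forall_mem_ofFn_iff.2 hg)
  rw [← List.ofFn_succ, List.map_ofFn, List.map_ofFn, List.prod_ofFn, List.length_ofFn] at hbound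
  have hk' : ((n + 1 : ℕ) : ℝ) - 1 = n := by push_cast; ring
  rw [blockNorm, one_div_mul_eq_div, hk']
  exact div_le_of_le_mul₀ (Nat.cast_nonneg _)
    (mul_nonneg (by positivity) (prod_nonneg fun i _ => regFactor_nonneg _))
    (hbound.trans_eq (by simp only [Function.comp_def]; ring))

/-- Asymptotic homomorphism, Szegö-type lemma.
For `k ≥ 2` power series `g 0, …, g (k-1)` with finite regularity factors,
`b_n(K_n(g_1)⋯K_n(g_k) − K_n(g_1⋯g_k)) ≤ ((k−1)/2)·α(g_1)⋯α(g_k)`. -/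
theorem stmt0 {G : Type*} [Countable G] (W : G → G → ℝ) (D : ℕ) (hD : 0 < D)
    (hker : KernelHyp W D)
    (k : ℕ) (hk : 2 ≤ k) (g : Fin k → ℕ → ℝ)
    (hg : ∀ i, Summable (fun h => |g i h| * (h + 1 : ℝ)))
    (Gn : Finset G) (hδ : 0 < boundary W Gn) :
    blockNorm W Gn
        ((List.ofFn fun i => Kn W (g i) Gn).prod
          - Kn W ((List.ofFn g).foldr cauchy cauchyOne) Gn)
      ≤ ((k : ℝ) - 1) / 2 * ∏ i, regFactor (g i) :=
  stmt0_general W D hker k hk g hg Gn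

end
end

section
/- For every h ∈ ℕ and every finite subset G_N ⊆ G, the porosity sum satisfies Σ_{k ∈ G∖G_N} Σ_{j ∈ G_N} |(W^h)(k,j)| ≤ (h+1)·δ_N. In particular, the porosity factor Δ_h := sup_N (1/δ_N) Σ_{k∈G∖G_N} Σ_{j∈G_N} |(W^h)(k,j)| satisfies Δ_h ≤ h+1. -/
open scoped BigOperators Classical
open MeasureTheory Filter ProbabilityTheory

noncomputable section

variable {G : Type*}

/- Write `W^{h+1}(k, j) = Σ_m W(k, m) W^h(m, j)` and sum over `k ∉ G_N`, `j ∈ G_N`.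
Since rows of `|W|` and of `|W^h|` sum to at most `1` (columns too, by symmetry), the
intermediate vertices `m ∉ G_N` contribute at most the porosity sum of `W^h`, while an
intermediate `m ∈ G_N` is reached from outside only if it lies on the boundary, and
contributes at most `1`. Hence the porosity sum grows by at most `δ_N` per step, and it
vanishes for `h = 0`: it is at most `h δ_N`. -/

open Finset

def boundaryFinset (W : G → G → ℝ) (GN : Finset G) : Finset G :=
  GN.filter fun i => ∃ j, j ∉ GN ∧ W i j ≠ 0

theorem boundary_eq_card_boundaryFinset (W : G → G → ℝ) (GN : Finset G) :
    boundary W GN = #(boundaryFinset W GN) := by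
  rw [boundary, boundaryFinset, ← Set.ncard_coe_finset, coe_filter]

theorem Wpow_succ_eq_sum {W : G → G → ℝ} {i : G} {S : Finset G}
    (hS : ∀ m, W i m ≠ 0 → m ∈ S) (h : ℕ) (j : G) :
    Wpow W (h + 1) i j = ∑ m ∈ S, W i m * Wpow W h m j :=
  tsum_eq_sum fun m hm => by rw [not_not.mp (mt (hS m) hm), zero_mul]

theorem abs_Wpow_succ_le {W : G → G → ℝ} {i : G} {S : Finset G}
    (hS : ∀ m, W i m ≠ 0 → m ∈ S) (h : ℕ) (j : G) :
    |Wpow W (h + 1) i j| ≤ ∑ m ∈ S, |W i m| * |Wpow W h m j| := by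
  rw [Wpow_succ_eq_sum hS]
  simpa only [abs_mul] using abs_sum_le_sum_abs (fun m => W i m * Wpow W h m j) S

theorem sum_abs_le_one_of_support_bound {W : G → G → ℝ} {D : ℕ}
    (hfin : ∀ i, ({j | W i j ≠ 0} : Set G).Finite)
    (hcard : ∀ i, ({j | W i j ≠ 0} : Set G).ncard ≤ D)
    (hbd : ∀ i j, |W i j| ≤ 1 / (D : ℝ)) (i : G) (F : Finset G) :
    ∑ k ∈ F, |W i k| ≤ 1 := by
  set F' := F.filter (W i · ≠ 0)
  have hF' : #F' ≤ D := by
    rw [← Set.ncard_coe_finset]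
    refine (Set.ncard_le_ncard (fun k hk => ?_) (hfin i)).trans (hcard i)
    exact (mem_filter.mp hk).2
  calc ∑ k ∈ F, |W i k| = ∑ k ∈ F', |W i k| :=
        (sum_filter_of_ne fun k _ hk => abs_ne_zero.mp hk).symm
    _ ≤ #F' * (1 / (D : ℝ)) := by simpa using sum_le_card_nsmul F' _ _ fun k _ => hbd i k
    _ ≤ D * (1 / (D : ℝ)) := by gcongr
    _ ≤ 1 := by rw [one_div]; exact mul_inv_le_one

theorem sum_abs_Wpow_le_one {W : G → G → ℝ} (hfin : ∀ i, ({j | W i j ≠ 0} : Set G).Finite)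
    (hrow : ∀ i (F : Finset G), ∑ k ∈ F, |W i k| ≤ 1) (h : ℕ) (i : G) (F : Finset G) :
    ∑ j ∈ F, |Wpow W h i j| ≤ 1 := by
  induction h generalizing i with
  | zero =>
    simp only [Wpow, apply_ite abs, abs_one, abs_zero, sum_ite_eq]
    split_ifs <;> norm_num
  | succ h ih =>
    set S := (hfin i).toFinset
    calc ∑ j ∈ F, |Wpow W (h + 1) i j|
        ≤ ∑ j ∈ F, ∑ m ∈ S, |W i m| * |Wpow W h m j| :=
          sum_le_sum fun j _ => abs_Wpow_succ_le (fun m hm => (hfin i).mem_toFinset.mpr hm) h j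
      _ = ∑ m ∈ S, |W i m| * ∑ j ∈ F, |Wpow W h m j| := by
          rw [sum_comm]; simp only [mul_sum]
      _ ≤ ∑ m ∈ S, |W i m| * 1 := by gcongr with m; exact ih m
      _ ≤ 1 := by simpa only [mul_one] using hrow i S

theorem mul_le_boundary_add_outside {W : G → G → ℝ} (hsym : ∀ i j, W i j = W j i)
    (hrow : ∀ i (F : Finset G), ∑ k ∈ F, |W i k| ≤ 1) {GN F : Finset G} (hF : Disjoint F GN)
    {B : G → ℝ} (hB0 : ∀ m, 0 ≤ B m) (hB1 : ∀ m, B m ≤ 1) (m : G) :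
    (∑ k ∈ F, |W k m|) * B m ≤
      (if m ∈ boundaryFinset W GN then 1 else 0) + (if m ∉ GN then B m else 0) := by
  have hA1 : ∑ k ∈ F, |W k m| ≤ 1 := by simpa only [hsym _ m] using hrow m F
  by_cases hm : m ∈ GN
  · by_cases hmb : m ∈ boundaryFinset W GN
    · simpa [hm, hmb] using mul_le_one₀ hA1 (hB0 m) (hB1 m)
    · have hA : ∑ k ∈ F, |W k m| = 0 := sum_eq_zero fun k hk => by
        have hWm : ∀ j, j ∉ GN → W m j = 0 := by simpa [boundaryFinset, hm] using hmb
        rw [hsym, hWm k (disjoint_left.mp hF hk), abs_zero]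
      simp [hA, hm, hmb]
  · have hmb : m ∉ boundaryFinset W GN := fun h => hm (mem_filter.mp h).1
    simpa [hm, hmb] using mul_le_of_le_one_left (hB0 m) hA1

theorem sum_sum_abs_Wpow_le_mul_boundary {W : G → G → ℝ} (hsym : ∀ i j, W i j = W j i)
    (hfin : ∀ i, ({j | W i j ≠ 0} : Set G).Finite)
    (hrow : ∀ i (F : Finset G), ∑ k ∈ F, |W i k| ≤ 1) (GN : Finset G) (h : ℕ)
    {F : Finset G} (hF : Disjoint F GN) :
    ∑ k ∈ F, ∑ j ∈ GN, |Wpow W h k j| ≤ h * boundary W GN := by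
  induction h generalizing F with
  | zero =>
    refine (sum_eq_zero fun k hk => sum_eq_zero fun j hj => ?_).le.trans (by simp)
    simp [Wpow, show k ≠ j from fun hkj => disjoint_left.mp hF hk (hkj ▸ hj)]
  | succ h ih =>
    set M := F.biUnion fun k => (hfin k).toFinset
    set B := fun m => ∑ j ∈ GN, |Wpow W h m j|
    have hB0 : ∀ m, 0 ≤ B m := fun m => sum_nonneg fun j _ => abs_nonneg _
    calc ∑ k ∈ F, ∑ j ∈ GN, |Wpow W (h + 1) k j|
        ≤ ∑ k ∈ F, ∑ j ∈ GN, ∑ m ∈ M, |W k m| * |Wpow W h m j| :=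
          sum_le_sum fun k hk => sum_le_sum fun j _ => abs_Wpow_succ_le
            (fun m hm => mem_biUnion.mpr ⟨k, hk, (hfin k).mem_toFinset.mpr hm⟩) h j
      _ = ∑ m ∈ M, (∑ k ∈ F, |W k m|) * B m := by
          simp only [B, sum_mul_sum]
          rw [eq_comm, sum_comm]
          exact sum_congr rfl fun _ _ => sum_comm
      _ ≤ ∑ m ∈ M,
            ((if m ∈ boundaryFinset W GN then 1 else 0) + (if m ∉ GN then B m else 0)) :=
          sum_le_sum fun m _ => mul_le_boundary_add_outside hsym hrow hF hB0
            (fun m => sum_abs_Wpow_le_one hfin hrow h m GN) m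
      _ = #(M ∩ boundaryFinset W GN) + ∑ m ∈ M.filter (· ∉ GN), B m := by
          rw [sum_add_distrib, sum_ite_mem, sum_filter]; simp
      _ ≤ boundary W GN + h * boundary W GN := by
          gcongr
          · rw [boundary_eq_card_boundaryFinset]; exact_mod_cast card_le_card inter_subset_right
          · exact ih (disjoint_left.mpr fun m hm => (mem_filter.mp hm).2)
      _ = (h + 1 : ℕ) * boundary W GN := by push_cast; ring

theorem stmt2_general {G : Type*} (W : G → G → ℝ) (D : ℕ)
    (hker : KernelHyp W D) (h : ℕ) :
    (∀ GN : Finset G,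
      (∑' k : {x : G // x ∉ GN}, ∑ j ∈ GN, |Wpow W h (k : G) j|)
        ≤ ((h : ℝ) + 1) * (boundary W GN : ℝ)) ∧
    (∀ Gseq : ℕ → Finset G, (∀ N, 0 < boundary W (Gseq N)) →
      (⨆ N : ℕ, (1 / (boundary W (Gseq N) : ℝ)) *
          ∑' k : {x : G // x ∉ Gseq N}, ∑ j ∈ Gseq N, |Wpow W h (k : G) j|)
        ≤ (h : ℝ) + 1) := by
  obtain ⟨hsym, hfin, hcard, hbd⟩ := hker
  have hrow := sum_abs_le_one_of_support_bound hfin hcard hbd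
  have porosity (GN : Finset G) :
      ∑' k : {x : G // x ∉ GN}, ∑ j ∈ GN, |Wpow W h (k : G) j| ≤
        (h + 1) * boundary W GN := by
    refine Real.tsum_le_of_sum_le (fun k => sum_nonneg fun j _ => abs_nonneg _) fun s => ?_
    have hs : Disjoint (s.map (.subtype _)) GN :=
      disjoint_left.mpr fun k hk => by obtain ⟨k, _, rfl⟩ := mem_map.mp hk; exact k.2
    calc ∑ k ∈ s, ∑ j ∈ GN, |Wpow W h k j|
        = ∑ k ∈ s.map (.subtype _), ∑ j ∈ GN, |Wpow W h k j| := by rw [sum_map]; rfl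
      _ ≤ h * boundary W GN := sum_sum_abs_Wpow_le_mul_boundary hsym hfin hrow GN h hs
      _ ≤ (h + 1) * boundary W GN := by gcongr; linarith
  refine ⟨porosity, fun Gseq hpos => ciSup_le fun N => ?_⟩
  rw [one_div, inv_mul_le_iff₀ (by exact_mod_cast hpos N), mul_comm]
  exact porosity (Gseq N)

/-- porosity factor bound. For every `h ∈ ℕ` and finite `G_N ⊆ G`,
`Σ_{k ∉ G_N} Σ_{j ∈ G_N} |(W^h)(k,j)| ≤ (h+1)·δ_N`; in particular, for any sequence
of finite subsets the porosity factor `Δ_h` is at most `h+1`. -/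
theorem stmt2 {G : Type*} [Countable G] (W : G → G → ℝ) (D : ℕ) (hD : 0 < D)
    (hker : KernelHyp W D) (h : ℕ) :
    (∀ GN : Finset G,
      (∑' k : {x : G // x ∉ GN}, ∑ j ∈ GN, |Wpow W h (k : G) j|)
        ≤ ((h : ℝ) + 1) * (boundary W GN : ℝ)) ∧
    (∀ Gseq : ℕ → Finset G, (∀ N, 0 < boundary W (Gseq N)) →
      (⨆ N : ℕ, (1 / (boundary W (Gseq N) : ℝ)) *
          ∑' k : {x : G // x ∉ Gseq N}, ∑ j ∈ Gseq N, |Wpow W h (k : G) j|)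
        ≤ (h : ℝ) + 1) :=
  stmt2_general W D hker h

end
end

section
/- Let θ_0 ∈ Θ and let (ℓ_n)_{n∈ℕ} be a sequence of continuous real-valued functions on Θ such that ℓ_n(θ_0) − ℓ_n(θ) converges, uniformly in θ ∈ Θ as n → ∞, to IK(θ_0, θ) := (1/2) ∫_{[−1,1]} ( −log(f_{θ_0}(λ)/f_θ(λ)) − 1 + f_{θ_0}(λ)/f_θ(λ) ) dμ(λ). If θ_n is any maximizer of ℓ_n over Θ for each n, then θ_n → θ_0 as n → ∞. -/
open MeasureTheory Filter

noncomputable section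

/-!
The integrand of the asymptotic Kullback information is the Itakura–Saito divergence
`u / v - log (u / v) - 1`, which is nonnegative and vanishes only when `u = v`; by
identifiability, `IK(θ₀, ·)` is therefore positive on `Θ \ {θ₀}`. Sup-norm continuity of
`θ ↦ f_θ`, together with uniform continuity of the divergence on a compact box inside the open
quadrant, makes `IK(θ₀, ·)` continuous, so it is bounded below by some `c > 0` on the compact set
`Θ \ U` for any neighbourhood `U` of `θ₀`. As `θₙ` maximizes `ℓₙ`, `ℓₙ(θ₀) - ℓₙ(θₙ) ≤ 0`, and
uniform convergence forces `IK(θ₀, θₙ) < c`, i.e. `θₙ ∈ U`, for large `n`.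
-/

open Set Topology

def itakuraSaito (u v : ℝ) : ℝ := -Real.log (u / v) - 1 + u / v

theorem itakuraSaito_nonneg {u v : ℝ} (hu : 0 < u) (hv : 0 < v) : 0 ≤ itakuraSaito u v := by
  have := Real.log_le_sub_one_of_pos (div_pos hu hv)
  unfold itakuraSaito
  linarith

theorem itakuraSaito_eq_zero_iff {u v : ℝ} (hu : 0 < u) (hv : 0 < v) :
    itakuraSaito u v = 0 ↔ u = v := by
  refine ⟨fun h => ?_, fun h => by simp [itakuraSaito, h, hv.ne']⟩
  by_contra huv
  have := Real.log_lt_sub_one_of_pos (div_pos hu hv) (mt (div_eq_one_iff_eq hv.ne').1 huv)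
  unfold itakuraSaito at h
  linarith

theorem ContinuousOn.itakuraSaito {X : Type*} [TopologicalSpace X] {g h : X → ℝ} {S : Set X}
    (hg : ContinuousOn g S) (hh : ContinuousOn h S) (hg0 : ∀ x ∈ S, 0 < g x)
    (hh0 : ∀ x ∈ S, 0 < h x) : ContinuousOn (fun x => itakuraSaito (g x) (h x)) S := by
  have hdiv := hg.div hh fun x hx => (hh0 x hx).ne'
  exact ((hdiv.log fun x hx => (div_pos (hg0 x hx) (hh0 x hx)).ne').neg.sub
    continuousOn_const).add hdiv

theorem TendstoUniformlyOn.itakuraSaito {ι X : Type*} [TopologicalSpace X] {l : Filter ι}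
    {S : Set X} (hS : IsCompact S) {F : ι → X → ℝ} {g h : X → ℝ}
    (hg : ContinuousOn g S) (hh : ContinuousOn h S) (hg0 : ∀ x ∈ S, 0 < g x)
    (hh0 : ∀ x ∈ S, 0 < h x) (hF : TendstoUniformlyOn F h l S) :
    TendstoUniformlyOn (fun i x => itakuraSaito (g x) (F i x))
      (fun x => itakuraSaito (g x) (h x)) l S := by
  obtain ⟨r, hr, hr_le⟩ :=
    hS.exists_forall_le' (hg.inf hh) fun x hx => lt_min (hg0 x hx) (hh0 x hx)
  obtain ⟨M, hM⟩ := hS.bddAbove_image (hg.sup hh)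
  have hle_M : ∀ x ∈ S, g x ⊔ h x ≤ M := fun x hx => hM (mem_image_of_mem _ hx)
  set B := Icc (r / 2) (M + r / 2) ×ˢ Icc (r / 2) (M + r / 2)
  have hB : UniformContinuousOn (fun p : ℝ × ℝ => _root_.itakuraSaito p.1 p.2) B :=
    (isCompact_Icc.prod isCompact_Icc).uniformContinuousOn_of_continuous
      (continuousOn_fst.itakuraSaito continuousOn_snd
        (fun p (hp : p ∈ B) => by linarith [hp.1.1]) fun p (hp : p ∈ B) => by linarith [hp.2.1])
  rw [Metric.tendstoUniformlyOn_iff] at hF ⊢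
  intro ε hε
  obtain ⟨δ, hδ, hBδ⟩ := Metric.uniformContinuousOn_iff.1 hB ε hε
  filter_upwards [hF _ (lt_min hδ (half_pos hr))] with i hi x hx
  have hd := hi x hx
  have hF_near : |h x - F i x| < r / 2 := hd.trans_le (min_le_right _ _)
  rw [abs_lt] at hF_near
  have hrx := le_inf_iff.1 (hr_le x hx)
  have hMx := sup_le_iff.1 (hle_M x hx)
  refine hBδ (g x, h x) ⟨⟨by linarith, by linarith⟩, ⟨by linarith, by linarith⟩⟩ (g x, F i x)
    ⟨⟨by linarith, by linarith⟩, ⟨by linarith, by linarith⟩⟩ ?_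
  simpa [Prod.dist_eq] using lt_of_lt_of_le hd (min_le_left _ _)

theorem tendsto_integral_of_tendstoUniformlyOn {ι X E : Type*} [MeasurableSpace X]
    [NormedAddCommGroup E] [NormedSpace ℝ E] {μ : Measure X} [IsFiniteMeasure μ]
    {l : Filter ι} {S : Set X} (hS : ∀ᵐ x ∂μ, x ∈ S) {F : ι → X → E} {g : X → E}
    (hF : ∀ᶠ i in l, Integrable (F i) μ) (hg : Integrable g μ) (h : TendstoUniformlyOn F g l S) :
    Tendsto (fun i => ∫ x, F i x ∂μ) l (𝓝 (∫ x, g x ∂μ)) := by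
  rw [Metric.tendsto_nhds]
  intro ε hε
  have hμ := measureReal_nonneg (μ := μ) (s := univ)
  have hδ : 0 < ε / (μ.real univ + 1) := by positivity
  filter_upwards [hF, Metric.tendstoUniformlyOn_iff.1 h _ hδ] with i hFi hi
  rw [dist_eq_norm, ← integral_sub hFi hg]
  calc ‖∫ x, F i x - g x ∂μ‖ ≤ ε / (μ.real univ + 1) * μ.real univ :=
        norm_integral_le_of_norm_le_const <| hS.mono fun x hx => by
          rw [← dist_eq_norm, dist_comm]; exact (hi x hx).le
    _ < ε := by
        rw [div_mul_eq_mul_div, div_lt_iff₀ (by positivity)]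
        nlinarith

theorem ContinuousOn.integrable_of_ae_mem {X : Type*} [TopologicalSpace X] [T2Space X]
    [MeasurableSpace X] [OpensMeasurableSpace X] {μ : Measure X} [IsFiniteMeasure μ]
    {S : Set X} (hS : ∀ᵐ x ∂μ, x ∈ S) (hSc : IsCompact S) {g : X → ℝ}
    (hg : ContinuousOn g S) : Integrable g μ := by
  rw [← Measure.restrict_eq_self_of_ae_mem hS]
  exact hg.integrableOn_compact hSc

def asymptoticKullback {Θ X : Type*} [MeasurableSpace X] (μ : Measure X) (f : Θ → X → ℝ)
    (θ0 θ : Θ) : ℝ :=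
  (1 / 2) * ∫ x, itakuraSaito (f θ0 x) (f θ x) ∂μ

section AsymptoticKullback

variable {Θ X : Type*} [TopologicalSpace X] [T2Space X] [MeasurableSpace X]
  [OpensMeasurableSpace X] {μ : Measure X} [IsFiniteMeasure μ] {S : Set X} {f : Θ → X → ℝ}
  {θ0 : Θ}

theorem asymptoticKullback_pos (hS : ∀ᵐ x ∂μ, x ∈ S) (hSc : IsCompact S) {θ : Θ}
    (hf0 : ContinuousOn (f θ0) S) (hf : ContinuousOn (f θ) S) (hf0_pos : ∀ x ∈ S, 0 < f θ0 x)
    (hf_pos : ∀ x ∈ S, 0 < f θ x) (hne : ¬ f θ =ᵐ[μ] f θ0) :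
    0 < asymptoticKullback μ f θ0 θ := by
  have hnn : 0 ≤ᵐ[μ] fun x => itakuraSaito (f θ0 x) (f θ x) :=
    hS.mono fun x hx => itakuraSaito_nonneg (hf0_pos x hx) (hf_pos x hx)
  have hint := (hf0.itakuraSaito hf hf0_pos hf_pos).integrable_of_ae_mem hS hSc
  refine mul_pos one_half_pos ((integral_nonneg_of_ae hnn).lt_of_ne fun h0 => hne ?_)
  filter_upwards [(integral_eq_zero_iff_of_nonneg_ae hnn hint).1 h0.symm, hS] with x hx hxS
  exact ((itakuraSaito_eq_zero_iff (hf0_pos x hxS) (hf_pos x hxS)).1 hx).symm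

theorem continuousOn_asymptoticKullback [TopologicalSpace Θ] (hS : ∀ᵐ x ∂μ, x ∈ S)
    (hSc : IsCompact S) {K : Set Θ} (hθ0 : θ0 ∈ K) (hpos : ∀ θ ∈ K, ∀ x ∈ S, 0 < f θ x)
    (hcont : ∀ θ ∈ K, ContinuousOn (f θ) S)
    (hunif : ∀ θ ∈ K, TendstoUniformlyOn f (f θ) (𝓝[K] θ) S) :
    ContinuousOn (asymptoticKullback μ f θ0) K := by
  have hint : ∀ θ ∈ K, Integrable (fun x => itakuraSaito (f θ0 x) (f θ x)) μ := fun θ hθ =>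
    ((hcont θ0 hθ0).itakuraSaito (hcont θ hθ) (hpos θ0 hθ0) (hpos θ hθ)).integrable_of_ae_mem
      hS hSc
  intro θ hθ
  exact (tendsto_integral_of_tendstoUniformlyOn hS (eventually_nhdsWithin_of_forall hint)
    (hint θ hθ) ((hunif θ hθ).itakuraSaito hSc (hcont θ0 hθ0) (hcont θ hθ) (hpos θ0 hθ0)
      (hpos θ hθ))).const_mul (1 / 2)

end AsymptoticKullback

theorem tendstoUniformlyOn_nhdsWithin_of_dist_le {Θ X β : Type*} [PseudoMetricSpace Θ]
    [PseudoMetricSpace β] {K : Set Θ} {S : Set X} {f : Θ → X → β} {θ : Θ}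
    (h : ∀ ε > 0, ∃ δ > 0, ∀ θ' ∈ K, dist θ' θ < δ → ∀ x ∈ S, dist (f θ' x) (f θ x) ≤ ε) :
    TendstoUniformlyOn f (f θ) (𝓝[K] θ) S := by
  refine Metric.tendstoUniformlyOn_iff.2 fun ε hε => ?_
  obtain ⟨δ, hδ, hf⟩ := h (ε / 2) (half_pos hε)
  refine eventually_nhdsWithin_iff.2 (Metric.eventually_nhds_iff.2 ⟨δ, hδ, ?_⟩)
  intro θ' hθ' hθ'K x hx
  rw [dist_comm]
  exact (hf θ' hθ'K hθ' x hx).trans_lt (half_lt_self hε)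

theorem TendstoUniformlyOn.eventually_lt_of_nonpos {ι α : Type*} {l : Filter ι} {K : Set α}
    {G : ι → α → ℝ} {F : α → ℝ} (h : TendstoUniformlyOn G F l K) {θn : ι → α}
    (hθn : ∀ n, θn n ∈ K) (hle : ∀ n, G n (θn n) ≤ 0) {c : ℝ} (hc : 0 < c) :
    ∀ᶠ n in l, F (θn n) < c := by
  filter_upwards [Metric.tendstoUniformlyOn_iff.1 h c hc] with n hn
  linarith [(abs_lt.1 (hn _ (hθn n))).2, hle n]

theorem IsCompact.tendsto_of_eventually_lt {ι α : Type*} [TopologicalSpace α] {K : Set α}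
    (hK : IsCompact K) {F : α → ℝ} (hF : ContinuousOn F K) {θ0 : α}
    (hpos : ∀ θ ∈ K, θ ≠ θ0 → 0 < F θ) {l : Filter ι} {θn : ι → α} (hθn : ∀ n, θn n ∈ K)
    (hlim : ∀ c > 0, ∀ᶠ n in l, F (θn n) < c) : Tendsto θn l (𝓝 θ0) := by
  refine tendsto_nhds.2 fun U hU hθ0U => ?_
  obtain ⟨c, hc, hcF⟩ := (hK.diff hU).exists_forall_le' (hF.mono sdiff_subset)
    fun θ hθ => hpos θ hθ.1 fun h => hθ.2 (h ▸ hθ0U)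
  filter_upwards [hlim c hc] with n hn
  by_contra hnU
  exact (hcF _ ⟨hθn n, hnU⟩).not_gt hn

theorem stmt12_general (a b : ℝ)
    (μ : Measure ℝ) [IsProbabilityMeasure μ]
    (hsupp : μ (Set.Icc (-1 : ℝ) 1)ᶜ = 0)
    (f : ℝ → ℝ → ℝ) (θ0 : ℝ) (hθ0 : θ0 ∈ Set.Icc a b)
    (hpos : ∀ θ ∈ Set.Icc a b, ∀ x ∈ Set.Icc (-1 : ℝ) 1, 0 < f θ x)
    (hcontx : ∀ θ ∈ Set.Icc a b, ContinuousOn (f θ) (Set.Icc (-1 : ℝ) 1))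
    (hcontsup : ∀ θ ∈ Set.Icc a b, ∀ ε > 0, ∃ δ > 0, ∀ θ' ∈ Set.Icc a b,
      |θ' - θ| < δ → ∀ x ∈ Set.Icc (-1 : ℝ) 1, |f θ' x - f θ x| ≤ ε)
    (hident : ∀ θ ∈ Set.Icc a b, (∀ᵐ x ∂μ, f θ x = f θ0 x) → θ = θ0)
    (ℓ : ℕ → ℝ → ℝ)
    (hconv : TendstoUniformlyOn (fun n θ => ℓ n θ0 - ℓ n θ)
      (fun θ => (1 / 2) * ∫ x, (-Real.log (f θ0 x / f θ x) - 1 + f θ0 x / f θ x) ∂μ)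
      atTop (Set.Icc a b))
    (θn : ℕ → ℝ)
    (hθn : ∀ n, θn n ∈ Set.Icc a b ∧ ∀ θ ∈ Set.Icc a b, ℓ n θ ≤ ℓ n (θn n)) :
    Tendsto θn atTop (nhds θ0) := by
  have hS : ∀ᵐ x ∂μ, x ∈ Set.Icc (-1 : ℝ) 1 := mem_ae_iff.2 hsupp
  have hIK : ContinuousOn (asymptoticKullback μ f θ0) (Set.Icc a b) :=
    continuousOn_asymptoticKullback hS isCompact_Icc hθ0 hpos hcontx fun θ hθ =>
      tendstoUniformlyOn_nhdsWithin_of_dist_le (hcontsup θ hθ)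
  have hmax : ∀ n, ℓ n θ0 - ℓ n (θn n) ≤ 0 := fun n => sub_nonpos.2 ((hθn n).2 θ0 hθ0)
  refine isCompact_Icc.tendsto_of_eventually_lt hIK (fun θ hθ hne => ?_) (fun n => (hθn n).1)
    fun c hc => hconv.eventually_lt_of_nonpos (fun n => (hθn n).1) hmax hc
  exact asymptoticKullback_pos hS isCompact_Icc (hcontx θ0 hθ0) (hcontx θ hθ) (hpos θ0 hθ0)
    (hpos θ hθ) (mt (hident θ hθ) hne)

/-- convergence of maximizers to the Kullback minimizer.
If `ℓ_n(θ_0) − ℓ_n(θ)` converges uniformly on the compact interval `Θ = [a,b]` to the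
asymptotic Kullback information
`IK(θ_0,θ) = (1/2)∫(−log(f_{θ_0}/f_θ) − 1 + f_{θ_0}/f_θ)dμ`, then any sequence of
maximizers `θ_n` of `ℓ_n` over `Θ` converges to `θ_0`. -/
theorem stmt12 (a b : ℝ) (hab : a < b)
    (μ : Measure ℝ) [IsProbabilityMeasure μ]
    (hsupp : μ (Set.Icc (-1 : ℝ) 1)ᶜ = 0)
    (f : ℝ → ℝ → ℝ) (θ0 : ℝ) (hθ0 : θ0 ∈ Set.Icc a b)
    (hpos : ∀ θ ∈ Set.Icc a b, ∀ x ∈ Set.Icc (-1 : ℝ) 1, 0 < f θ x)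
    (hcontx : ∀ θ ∈ Set.Icc a b, ContinuousOn (f θ) (Set.Icc (-1 : ℝ) 1))
    (hcontθ : ∀ x ∈ Set.Icc (-1 : ℝ) 1, ContinuousOn (fun θ => f θ x) (Set.Icc a b))
    (hcontsup : ∀ θ ∈ Set.Icc a b, ∀ ε > 0, ∃ δ > 0, ∀ θ' ∈ Set.Icc a b,
      |θ' - θ| < δ → ∀ x ∈ Set.Icc (-1 : ℝ) 1, |f θ' x - f θ x| ≤ ε)
    (hident : ∀ θ ∈ Set.Icc a b, (∀ᵐ x ∂μ, f θ x = f θ0 x) → θ = θ0)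
    (ℓ : ℕ → ℝ → ℝ) (hℓcont : ∀ n, ContinuousOn (ℓ n) (Set.Icc a b))
    (hconv : TendstoUniformlyOn (fun n θ => ℓ n θ0 - ℓ n θ)
      (fun θ => (1 / 2) * ∫ x, (-Real.log (f θ0 x / f θ x) - 1 + f θ0 x / f θ x) ∂μ)
      atTop (Set.Icc a b))
    (θn : ℕ → ℝ)
    (hθn : ∀ n, θn n ∈ Set.Icc a b ∧ ∀ θ ∈ Set.Icc a b, ℓ n θ ≤ ℓ n (θn n)) :
    Tendsto θn atTop (nhds θ0) :=
  stmt12_general a b μ hsupp f θ0 hθ0 hpos hcontx hcontsup hident ℓ hconv θn hθn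

end
end
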